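/- arXiv:2508.16302 — 4 statements merged into one kernel-verified Lean document; each statement's English description precedes it below -/
import Mathlib

section
/- In a divided power algebra over a field of prime characteristic p, for all a, b one has (a+b)^[p] = a^[p] + b^[p] + Σ_{i=1}^{p-1} ((-1)^i / i) a^{*i} * b^{*(p-i)}, where a^{*i} denotes the i-fold product and 1/i is the inverse of i in F. -/
open scoped TensorProduct

/-- Iterated product with respect to a bilinear multiplication:
`mpow mul a n = a^{*(n+1)}` (so `mpow mul a 0 = a`). -/
def mpow {F : Type} [Field F] {A : Type} [AddCommGroup A] [Module F A]
    (mul : A →ₗ[F] A →ₗ[F] A) (a : A) : ℕ → A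
  | 0 => a
  | n + 1 => mul (mpow mul a n) a

/-- A (non-unital) divided power algebra over a field `F`: a commutative associative
`F`-algebra equipped with divided power operations `(-)^[n]` for `n ≥ 1` satisfying
Cartan's axioms [dp.1]–[dp.6]. -/
structure DPAlgFull (F : Type) [Field F] (A : Type) [AddCommGroup A] [Module F A] where
  mul : A →ₗ[F] A →ₗ[F] A
  mul_comm : ∀ a b, mul a b = mul b a
  mul_assoc : ∀ a b c, mul (mul a b) c = mul a (mul b c)
  dpow : ℕ → A → A
  /-- [dp.1] `(λa)^[n] = λ^n a^[n]` -/
  dpow_smul : ∀ n, 1 ≤ n → ∀ (c : F) (a : A), dpow n (c • a) = c ^ n • dpow n a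
  /-- [dp.2] `a^[m] * a^[n] = binom(m+n,m) a^[m+n]` -/
  dpow_mul_dpow : ∀ m n, 1 ≤ m → 1 ≤ n → ∀ a,
    mul (dpow m a) (dpow n a) = (((m + n).choose m : ℕ) : F) • dpow (m + n) a
  /-- [dp.3] `(a+b)^[n] = a^[n] + ∑_{l=1}^{n-1} a^[l]*b^[n-l] + b^[n]` -/
  dpow_add : ∀ n, 1 ≤ n → ∀ a b, dpow n (a + b) =
    dpow n a + (∑ l ∈ Finset.Ioo 0 n, mul (dpow l a) (dpow (n - l) b)) + dpow n b
  /-- [dp.4] `a^[1] = a` -/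
  dpow_one : ∀ a, dpow 1 a = a
  /-- [dp.5] `(a*b)^[n] = n! a^[n]*b^[n]` -/
  dpow_mul : ∀ n, 1 ≤ n → ∀ a b,
    dpow n (mul a b) = ((n.factorial : ℕ) : F) • mul (dpow n a) (dpow n b)
  /-- [dp.6] `(a^[n])^[m] = ((mn)!/(m!(n!)^m)) a^[mn]` -/
  dpow_comp : ∀ m n, 1 ≤ m → 1 ≤ n → ∀ a, dpow m (dpow n a) =
    ((((m * n).factorial / (m.factorial * n.factorial ^ m)) : ℕ) : F) • dpow (m * n) a

/-!
Multiplying out the iterated products with [dp.2] gives `a^{*i} = i! a^[i]`, so the `i`-th term of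
[dp.3] for `n = p` is `a^[i] b^[p-i] = a^{*i} b^{*(p-i)} / (i! (p-i)!)`. Wilson's theorem
`(p-1)! = -1` and `p - k ≡ -k` give `i! (p-i)! ≡ (-1)^i i (mod p)`.
-/

open Nat

section Wilson

variable {R : Type*} [CommRing R] {p : ℕ} [CharP R p]

theorem factorial_mul_factorial_eq_neg_one_pow (hp : p.Prime) {m n : ℕ} (h : m + n + 1 = p) :
    (m ! * n ! : R) = (-1) ^ (m + 1) := by
  induction m generalizing n with
  | zero =>
    have : Fact p.Prime := ⟨hp⟩
    have hwilson := congrArg (ZMod.castHom (dvd_refl p) R) (ZMod.wilsons_lemma (p := p))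
    rw [map_natCast, map_neg, map_one] at hwilson
    simpa [show n = p - 1 by omega] using hwilson
  | succ m ih =>
    have hn : ((n + 1 : ℕ) : R) = -(m + 1 : ℕ) := by
      rw [eq_neg_iff_add_eq_zero, ← Nat.cast_add, show n + 1 + (m + 1) = p by omega,
        CharP.cast_eq_zero]
    have hih := ih (n := n + 1) (by omega)
    rw [factorial_succ n, Nat.cast_mul, hn] at hih
    rw [factorial_succ, pow_succ, ← hih]
    push_cast
    ring

theorem factorial_mul_factorial_sub_eq (hp : p.Prime) {i : ℕ} (hi : i ≤ p) :
    (i ! * (p - i)! : R) = (-1) ^ i * i := by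
  rcases i with _ | m
  · simpa using (CharP.cast_eq_zero_iff R p _).mpr (Nat.dvd_factorial hp.pos le_rfl)
  · rw [factorial_succ, Nat.cast_mul, mul_assoc,
      factorial_mul_factorial_eq_neg_one_pow hp (n := p - (m + 1)) (by omega)]
    ring

end Wilson

section DPAlgFull

variable {F : Type} [Field F] {A : Type} [AddCommGroup A] [Module F A] (S : DPAlgFull F A)

theorem DPAlgFull.mpow_eq_factorial_smul_dpow (a : A) (n : ℕ) :
    mpow S.mul a n = ((n + 1)! : F) • S.dpow (n + 1) a := by
  induction n with
  | zero => simp [mpow, S.dpow_one]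
  | succ n ih =>
    have hmul := S.dpow_mul_dpow (n + 1) 1 (by omega) le_rfl a
    rw [S.dpow_one, Nat.choose_succ_self_right] at hmul
    rw [mpow, ih, map_smul, LinearMap.smul_apply, hmul, smul_smul, factorial_succ (n + 1)]
    push_cast
    ring_nf

theorem DPAlgFull.mpow_sub_one_eq_factorial_smul_dpow (a : A) {n : ℕ} (hn : 0 < n) :
    mpow S.mul a (n - 1) = (n ! : F) • S.dpow n a := by
  obtain ⟨m, rfl⟩ := Nat.exists_eq_add_of_lt hn
  simpa using S.mpow_eq_factorial_smul_dpow a m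

end DPAlgFull

/-- In a divided power algebra over a field of prime characteristic
`p`, for all `a, b`:
`(a+b)^[p] = a^[p] + b^[p] + ∑_{i=1}^{p-1} ((-1)^i / i) a^{*i} * b^{*(p-i)}`
(here `mpow S.mul a (i-1) = a^{*i}`). -/
theorem dpow_p_add_of_charP
    (p : ℕ) (hp : p.Prime) (F : Type) [Field F] [CharP F p]
    (A : Type) [AddCommGroup A] [Module F A] (S : DPAlgFull F A) :
    ∀ a b : A, S.dpow p (a + b) = S.dpow p a + S.dpow p b +
      ∑ i ∈ Finset.Ioo 0 p, ((-1 : F) ^ i * (i : F)⁻¹) •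
        S.mul (mpow S.mul a (i - 1)) (mpow S.mul b (p - i - 1)) := by
  intro a b
  rw [S.dpow_add p hp.one_lt.le, add_right_comm]
  congr 1
  refine Finset.sum_congr rfl fun i hi => ?_
  obtain ⟨hi0, hip⟩ := Finset.mem_Ioo.mp hi
  have hi_ne : (i : F) ≠ 0 :=
    (CharP.cast_eq_zero_iff F p i).not.mpr (Nat.not_dvd_of_pos_of_lt hi0 hip)
  have hcoeff : ((-1 : F) ^ i * (i : F)⁻¹) * ((-1) ^ i * i) = 1 := by
    field_simp
    rw [← pow_mul, pow_mul', neg_one_sq, one_pow]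
  rw [S.mpow_sub_one_eq_factorial_smul_dpow a hi0,
    S.mpow_sub_one_eq_factorial_smul_dpow b (Nat.sub_pos_of_lt hip)]
  simp only [map_smul, LinearMap.smul_apply, smul_smul]
  rw [mul_comm ((p - i)! : F), factorial_mul_factorial_sub_eq hp hip.le, hcoeff, one_smul]
end

section
/- Let A be a divided power algebra over a field of characteristic p > 0 and let M be a divided power A-module with p-map π. Then the vector space A ⊕ M with multiplication (a,m)*(b,n) = (a*b, a·n + b·m) and p-th divided power (a,m)^[p] = (a^[p], π(m) − a^{p−1}·m) is a divided power algebra. -/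
open scoped TensorProduct

/-- A (non-unital) divided power algebra over a field `F` of characteristic `p`,
in Soublin's presentation: a commutative associative `F`-algebra together with a
`p`-th divided power operation satisfying `a^{*p} = 0`,
`(a+b)^[p] = a^[p] + b^[p] + ∑_{i=1}^{p-1} ((-1)^i/i) a^{*i} * b^{*(p-i)}`
and `(a*b)^[p] = 0`. -/
structure DPAlg (p : ℕ) (F : Type) [Field F] (A : Type) [AddCommGroup A] [Module F A] where
  mul : A →ₗ[F] A →ₗ[F] A
  mul_comm : ∀ a b, mul a b = mul b a
  mul_assoc : ∀ a b c, mul (mul a b) c = mul a (mul b c)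
  dpow : A → A
  dpow_smul : ∀ (c : F) (a : A), dpow (c • a) = c ^ p • dpow a
  pow_p : ∀ a, mpow mul a (p - 1) = 0
  dpow_add : ∀ a b, dpow (a + b) = dpow a + dpow b +
      ∑ i ∈ Finset.Ioo 0 p, ((-1 : F) ^ i * (i : F)⁻¹) •
        mul (mpow mul a (i - 1)) (mpow mul b (p - i - 1))
  dpow_mul : ∀ a b, dpow (mul a b) = 0

/-- Morphisms of divided power algebras. -/
structure DPHom {p : ℕ} {F : Type} [Field F] {A B : Type}
    [AddCommGroup A] [Module F A] [AddCommGroup B] [Module F B]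
    (S : DPAlg p F A) (T : DPAlg p F B) where
  toFun : A →ₗ[F] B
  map_mul : ∀ a b, toFun (S.mul a b) = T.mul (toFun a) (toFun b)
  map_dpow : ∀ a, toFun (S.dpow a) = T.dpow (toFun a)

/-- A divided power module over a divided power algebra `A`: a module over the
underlying (non-unital) commutative algebra `U(A)` together with a `p`-map `π`. -/
structure DPMod (p : ℕ) {F : Type} [Field F] {A : Type} [AddCommGroup A] [Module F A]
    (S : DPAlg p F A) (M : Type) [AddCommGroup M] [Module F M] where
  smul : A →ₗ[F] M →ₗ[F] M
  mul_smul : ∀ a b m, smul (S.mul a b) m = smul a (smul b m)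
  pmap : M → M
  pmap_add : ∀ m m', pmap (m + m') = pmap m + pmap m'
  pmap_smul : ∀ (c : F) m, pmap (c • m) = c ^ p • pmap m
  pmap_asmul : ∀ (a : A) (m : M), pmap (smul a m) = 0

/-!
Write `L a` for the operator `m ↦ a • m`; these operators commute, `L (a * b) = L a * L b`,
and the module part of `(a, m)^{*i}` is `i • L a ^ (i - 1) m`. In the divided power formula
for `(a + b, m + n)` the coefficient `(-1)^i / i` cancels the factors `i` and `p - i = -i`, so
the cross terms become the terms of the binomial expansion of `(L a + L b)^(p - 1)`, whose
coefficients are `(p - 1).choose j = (-1)^j` in characteristic `p`. Their sum, together with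
`L a^(p-1) m` and `L b^(p-1) n`, is exactly `(L a + L b)^(p - 1) (m + n)`. The axiom
`(x * y)^[p] = 0` holds because `L (a * b)^(p - 1) * L a = L a ^ p * L b ^ (p - 1)` and
`L a ^ p = L (a^{*p}) = 0`.
-/

theorem cast_choose_prime_sub_one {R : Type*} [Ring R] {p : ℕ} [CharP R p] (hp : p.Prime)
    {j : ℕ} (hj : j < p) : (((p - 1).choose j : ℕ) : R) = (-1) ^ j := by
  induction j with
  | zero => simp
  | succ j ih =>
    have hpascal : ((p - 1).choose j + (p - 1).choose (j + 1) : R) = 0 := by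
      rw [← Nat.cast_add, ← Nat.choose_succ_succ', Nat.sub_add_cancel hp.one_lt.le,
        CharP.cast_eq_zero_iff R p]
      exact hp.dvd_choose_self j.succ_ne_zero hj
    rw [ih (by omega)] at hpascal
    rw [eq_neg_of_add_eq_zero_right hpascal, pow_succ, mul_neg_one]

theorem neg_one_pow_prime_sub_one {R : Type*} [Ring R] {p : ℕ} [CharP R p] (hp : p.Prime) :
    (-1 : R) ^ (p - 1) = 1 := by
  rcases hp.eq_two_or_odd' with rfl | hodd
  · simp [CharTwo.neg_eq]
  · exact Even.neg_one_pow (Nat.Odd.sub_odd hodd odd_one)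

namespace Commute

variable {R B : Type*} [CommRing R] [Ring B] [Algebra R B] {p : ℕ} [CharP R p] {x y : B}

theorem add_pow_prime_sub_one (hp : p.Prime) (h : Commute x y) :
    (x + y) ^ (p - 1) = ∑ j ∈ Finset.range p, (-1 : R) ^ j • (x ^ j * y ^ (p - 1 - j)) := by
  rw [h.add_pow, Nat.sub_add_cancel hp.one_lt.le]
  refine Finset.sum_congr rfl fun j hj => ?_
  rw [← nsmul_eq_mul', ← Nat.cast_smul_eq_nsmul R,
    cast_choose_prime_sub_one hp (Finset.mem_range.mp hj)]

theorem add_pow_prime_sub_one_sub_pow_right (hp : p.Prime) (h : Commute x y) :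
    (x + y) ^ (p - 1) - y ^ (p - 1) =
      ∑ i ∈ Finset.Ioo 0 p, (-1 : R) ^ i • (x ^ i * y ^ (p - 1 - i)) := by
  rw [h.add_pow_prime_sub_one (R := R) hp, Finset.range_eq_Ico,
    Finset.sum_eq_sum_Ico_succ_bot hp.pos, Finset.Ico_add_one_left_eq_Ioo]
  simp

theorem add_pow_prime_sub_one_sub_pow_left (hp : p.Prime) (h : Commute x y) :
    (x + y) ^ (p - 1) - x ^ (p - 1) =
      ∑ i ∈ Finset.Ioo 0 p, (-1 : R) ^ (i - 1) • (x ^ (i - 1) * y ^ (p - 1 - (i - 1))) := by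
  obtain ⟨q, rfl⟩ : ∃ q, p = q + 1 := ⟨p - 1, (Nat.sub_add_cancel hp.one_lt.le).symm⟩
  have hsign : (-1 : R) ^ q = 1 := neg_one_pow_prime_sub_one hp
  rw [h.add_pow_prime_sub_one (R := R) hp, Finset.sum_range_succ,
    ← Finset.Ico_add_one_left_eq_Ioo, Finset.sum_Ico_eq_sum_range]
  simp [hsign]

end Commute

namespace DPMod

variable {p : ℕ} {F : Type} [Field F] {A M : Type} [AddCommGroup A] [Module F A]
  [AddCommGroup M] [Module F M] {S : DPAlg p F A} (Mo : DPMod p S M)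

theorem smul_mul_eq_mul (a b : A) : Mo.smul (S.mul a b) = Mo.smul a * Mo.smul b :=
  LinearMap.ext (Mo.mul_smul a b)

theorem commute_smul (a b : A) : Commute (Mo.smul a) (Mo.smul b) := by
  rw [Commute, SemiconjBy, ← smul_mul_eq_mul, ← smul_mul_eq_mul, S.mul_comm]

theorem smul_mpow (a : A) (n : ℕ) : Mo.smul (mpow S.mul a n) = Mo.smul a ^ (n + 1) := by
  induction n with
  | zero => rw [zero_add, pow_one]; rfl
  | succ n ih => rw [mpow, smul_mul_eq_mul, ih, ← pow_succ]

theorem smul_pow_eq_zero (hp : 0 < p) (a : A) : Mo.smul a ^ p = 0 := by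
  simpa [S.pow_p, Nat.sub_add_cancel hp, eq_comm] using Mo.smul_mpow a (p - 1)

theorem smul_mul_pow_sub_one_mul_smul (hp : 0 < p) (a b : A) :
    Mo.smul (S.mul a b) ^ (p - 1) * Mo.smul a = 0 := by
  rw [smul_mul_eq_mul, (Mo.commute_smul a b).mul_pow, mul_assoc,
    ((Mo.commute_smul b a).pow_left _).eq, ← mul_assoc, ← pow_succ, Nat.sub_add_cancel hp,
    Mo.smul_pow_eq_zero hp, zero_mul]

def semidirectMul : (A × M) →ₗ[F] (A × M) →ₗ[F] (A × M) :=
  LinearMap.mk₂ F (fun x y => (S.mul x.1 y.1, Mo.smul x.1 y.2 + Mo.smul y.1 x.2))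
    (fun x x' y => by ext <;> simp; abel)
    (fun c x y => by ext <;> simp)
    (fun x y y' => by ext <;> simp; abel)
    (fun c x y => by ext <;> simp)

@[simp]
theorem semidirectMul_apply (x y : A × M) :
    Mo.semidirectMul x y = (S.mul x.1 y.1, Mo.smul x.1 y.2 + Mo.smul y.1 x.2) := rfl

theorem semidirectMul_comm (x y : A × M) : Mo.semidirectMul x y = Mo.semidirectMul y x := by
  simp [S.mul_comm x.1, add_comm]

theorem semidirectMul_assoc (x y z : A × M) :
    Mo.semidirectMul (Mo.semidirectMul x y) z = Mo.semidirectMul x (Mo.semidirectMul y z) := by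
  ext
  · exact S.mul_assoc _ _ _
  · simp only [semidirectMul_apply, map_add, Mo.mul_smul]
    rw [← Mo.mul_smul z.1, S.mul_comm z.1, Mo.mul_smul, ← Mo.mul_smul z.1, S.mul_comm z.1,
      Mo.mul_smul]
    abel

theorem mpow_semidirectMul (x : A × M) (n : ℕ) :
    mpow Mo.semidirectMul x n = (mpow S.mul x.1 n, (n + 1) • (Mo.smul x.1 ^ n) x.2) := by
  induction n with
  | zero => simp [mpow]
  | succ n ih =>
    rw [mpow, ih, semidirectMul_apply, map_nsmul, ← Module.End.mul_apply, ← pow_succ',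
      smul_mpow, succ_nsmul' _ (n + 1)]
    rfl

theorem mpow_semidirectMul_sub_one [CharP F p] (hp : 0 < p) (x : A × M) :
    mpow Mo.semidirectMul x (p - 1) = 0 := by
  rw [mpow_semidirectMul, S.pow_p, Nat.sub_add_cancel hp, ← Nat.cast_smul_eq_nsmul F,
    CharP.cast_eq_zero, zero_smul]
  rfl

theorem snd_semidirectMul_mpow_mpow (a b : A) (m n : M) (i j : ℕ) :
    (Mo.semidirectMul (mpow Mo.semidirectMul (a, m) i) (mpow Mo.semidirectMul (b, n) j)).2 =
      (j + 1) • (Mo.smul a ^ (i + 1) * Mo.smul b ^ j) n +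
        (i + 1) • (Mo.smul a ^ i * Mo.smul b ^ (j + 1)) m := by
  rw [mpow_semidirectMul, mpow_semidirectMul, semidirectMul_apply, map_nsmul, map_nsmul,
    smul_mpow, smul_mpow, ← Module.End.mul_apply, ← Module.End.mul_apply,
    ((Mo.commute_smul b a).pow_pow _ _).eq]

theorem snd_smul_semidirectMul_mpow_mpow [CharP F p] {i : ℕ} (hi : i ∈ Finset.Ioo 0 p)
    (a b : A) (m n : M) :
    (((-1 : F) ^ i * (i : F)⁻¹) • Mo.semidirectMul (mpow Mo.semidirectMul (a, m) (i - 1))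
        (mpow Mo.semidirectMul (b, n) (p - i - 1))).2 =
      -(((-1 : F) ^ i • (Mo.smul a ^ i * Mo.smul b ^ (p - 1 - i))) n +
        ((-1 : F) ^ (i - 1) • (Mo.smul a ^ (i - 1) * Mo.smul b ^ (p - 1 - (i - 1)))) m) := by
  obtain ⟨hi0, hip⟩ := Finset.mem_Ioo.mp hi
  obtain ⟨k, rfl⟩ : ∃ k, i = k + 1 := ⟨i - 1, by omega⟩
  obtain ⟨j, hj⟩ : ∃ j, p = k + 1 + j + 1 := ⟨p - (k + 1) - 1, by omega⟩
  have hk : ((k + 1 : ℕ) : F) ≠ 0 := by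
    rw [Ne, CharP.cast_eq_zero_iff F p]
    exact Nat.not_dvd_of_pos_of_lt hi0 hip
  have hj' : ((j + 1 : ℕ) : F) = -((k + 1 : ℕ) : F) := by
    refine eq_neg_of_add_eq_zero_left ?_
    rw [← Nat.cast_add, show j + 1 + (k + 1) = p by omega, CharP.cast_eq_zero]
  rw [Prod.smul_snd, snd_semidirectMul_mpow_mpow, show p - (k + 1) - 1 = j by omega,
    show p - 1 - (k + 1) = j by omega, Nat.add_sub_cancel, show p - 1 - k = j + 1 by omega,
    ← Nat.cast_smul_eq_nsmul F, ← Nat.cast_smul_eq_nsmul F (k + 1), hj']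
  simp only [LinearMap.smul_apply]
  push_cast at hk ⊢
  match_scalars
  · field_simp
  · field_simp
    ring

def semidirectDpow (x : A × M) : A × M :=
  (S.dpow x.1, Mo.pmap x.2 - Mo.smul (mpow S.mul x.1 (p - 2)) x.2)

theorem semidirectDpow_eq (hp : 2 ≤ p) (x : A × M) :
    Mo.semidirectDpow x = (S.dpow x.1, Mo.pmap x.2 - (Mo.smul x.1 ^ (p - 1)) x.2) := by
  rw [semidirectDpow, smul_mpow, show p - 2 + 1 = p - 1 by omega]

theorem semidirectDpow_smul (hp : 2 ≤ p) (c : F) (x : A × M) :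
    Mo.semidirectDpow (c • x) = c ^ p • Mo.semidirectDpow x := by
  have hc : c * c ^ (p - 1) = c ^ p := by rw [← pow_succ', Nat.sub_add_cancel (by omega)]
  simp only [semidirectDpow_eq Mo hp, Prod.smul_fst, Prod.smul_snd, S.dpow_smul, Mo.pmap_smul,
    map_smul, smul_pow, Prod.smul_mk, smul_sub, LinearMap.smul_apply, smul_smul, hc]

theorem semidirectDpow_add [CharP F p] (hp : p.Prime) (x y : A × M) :
    Mo.semidirectDpow (x + y) = Mo.semidirectDpow x + Mo.semidirectDpow y +
      ∑ i ∈ Finset.Ioo 0 p, ((-1 : F) ^ i * (i : F)⁻¹) •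
        Mo.semidirectMul (mpow Mo.semidirectMul x (i - 1))
          (mpow Mo.semidirectMul y (p - i - 1)) := by
  obtain ⟨a, m⟩ := x
  obtain ⟨b, n⟩ := y
  have hcomm := Mo.commute_smul a b
  ext
  · simp only [semidirectDpow, Prod.fst_add, Prod.fst_sum, Prod.smul_fst, mpow_semidirectMul,
      semidirectMul_apply, S.dpow_add, add_assoc]
  · rw [Prod.snd_add, Prod.snd_sum, Finset.sum_congr rfl fun i hi =>
      Mo.snd_smul_semidirectMul_mpow_mpow hi a b m n, Finset.sum_neg_distrib,
      Finset.sum_add_distrib, ← LinearMap.sum_apply, ← LinearMap.sum_apply,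
      ← hcomm.add_pow_prime_sub_one_sub_pow_right hp,
      ← hcomm.add_pow_prime_sub_one_sub_pow_left hp]
    simp only [semidirectDpow_eq Mo hp.two_le, Prod.snd_add, Prod.fst_add, Mo.pmap_add, map_add,
      LinearMap.sub_apply]
    abel

theorem semidirectDpow_semidirectMul (hp : 2 ≤ p) (x y : A × M) :
    Mo.semidirectDpow (Mo.semidirectMul x y) = 0 := by
  have hkill_left := Mo.smul_mul_pow_sub_one_mul_smul (by omega) x.1 y.1
  have hkill_right := Mo.smul_mul_pow_sub_one_mul_smul (by omega) y.1 x.1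
  rw [S.mul_comm] at hkill_right
  rw [semidirectDpow_eq Mo hp, semidirectMul_apply, S.dpow_mul, Mo.pmap_add, Mo.pmap_asmul,
    Mo.pmap_asmul, map_add, ← Module.End.mul_apply, ← Module.End.mul_apply, hkill_left,
    hkill_right]
  simp

def semidirectProduct [CharP F p] (hp : p.Prime) : DPAlg p F (A × M) where
  mul := Mo.semidirectMul
  mul_comm := Mo.semidirectMul_comm
  mul_assoc := Mo.semidirectMul_assoc
  dpow := Mo.semidirectDpow
  dpow_smul := Mo.semidirectDpow_smul hp.two_le
  pow_p := Mo.mpow_semidirectMul_sub_one hp.pos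
  dpow_add := Mo.semidirectDpow_add hp
  dpow_mul := Mo.semidirectDpow_semidirectMul hp.two_le

end DPMod

/-- Let `A` be a divided power algebra over a field of characteristic
`p > 0` and `M` a divided power `A`-module with `p`-map `π`.  Then `A ⊕ M` with
multiplication `(a,m)*(b,n) = (a*b, a·n + b·m)` and `p`-th divided power
`(a,m)^[p] = (a^[p], π(m) - a^{p-1}·m)` is a divided power algebra. -/
theorem semidirect_product_isDPAlg
    (p : ℕ) (hp : p.Prime) (F : Type) [Field F] [CharP F p]
    (A M : Type) [AddCommGroup A] [Module F A] [AddCommGroup M] [Module F M]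
    (S : DPAlg p F A) (Mo : DPMod p S M) :
    ∃ T : DPAlg p F (A × M),
      (∀ (a b : A) (m n : M),
        T.mul (a, m) (b, n) = (S.mul a b, Mo.smul a n + Mo.smul b m)) ∧
      (∀ (a : A) (m : M),
        T.dpow (a, m) = (S.dpow a, Mo.pmap m - Mo.smul (mpow S.mul a (p - 2)) m)) :=
  ⟨Mo.semidirectProduct hp, fun _ _ _ _ => rfl, fun _ _ => rfl⟩
end

section
/- Let A be a divided power algebra in characteristic p and M a module over the underlying commutative algebra U(A). The lift map λ: T°(Γ⁺_A(M)) → Γ⁺_A(M) determined on generators by λ(a) = a, λ(m) = 0, λ(da) = 0, λ(dm) = m (for a ∈ A, m ∈ M) is a well-defined morphism of divided power algebras. -/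
/-!
The lift is produced by the two universal properties, through the divided power algebra of dual
numbers `E[ε] = E × E`, with `(a, x) * (b, y) = (a b, a y + b x)` and
`(a, x)^[p] = (a^[p], -a^{p-1} x)`. The universal property of `E = Γ⁺_A(M)` gives a morphism
`E → E[ε]` with `a ↦ (a, 0)` and `m ↦ (0, m)`; its first component is a morphism
`g : E → E` and its second a special derivation along `g`, which the universal property of
`T°(E)` turns into `λ`.

The divided power axioms for `E[ε]` are checked in the unitization of `E`. The only one that is
not formal, for `(u + v)^[p]`, reduces to `(a + b)^{p-1} = ∑_{k<p} (-1)^k a^k b^{p-1-k}`, which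
holds in characteristic `p` because `(p-1).choose k ≡ (-1)^k`.
-/

open scoped TensorProduct

open Finset

section CharP
variable {p : ℕ} {F : Type} [Field F] [CharP F p] {W : Type} [CommRing W] [Algebra F W]

theorem cast_choose_pred_eq_neg_one_pow (hp : p.Prime) {k : ℕ} (hk : k < p) :
    (((p - 1).choose k : ℕ) : F) = (-1) ^ k := by
  induction k with
  | zero => simp
  | succ k ih =>
    have hpascal : (p - 1).choose k + (p - 1).choose (k + 1) = p.choose (k + 1) := by
      rw [← Nat.choose_succ_succ', Nat.sub_add_cancel hp.one_le]
    have hzero : ((p.choose (k + 1) : ℕ) : F) = 0 :=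
      (CharP.cast_eq_zero_iff F p _).2 (hp.dvd_choose_self k.succ_ne_zero hk)
    rw [← hpascal, Nat.cast_add, ih (by omega)] at hzero
    linear_combination hzero

theorem add_pow_pred_eq_sum (hp : p.Prime) (a b : W) :
    (a + b) ^ (p - 1) = ∑ k ∈ range p, (-1 : F) ^ k • (a ^ k * b ^ (p - 1 - k)) := by
  rw [add_pow, Nat.sub_add_cancel hp.one_le]
  refine sum_congr rfl fun k hk => ?_
  rw [← map_natCast (algebraMap F W), cast_choose_pred_eq_neg_one_pow hp (mem_range.1 hk),
    Algebra.smul_def, mul_comm]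

theorem sum_Ioo_neg_one_pow_smul_eq_sub (hp : p.Prime) (a b : W) :
    ∑ i ∈ Ioo 0 p, (-1 : F) ^ i • (a ^ i * b ^ (p - 1 - i)) =
      (a + b) ^ (p - 1) - b ^ (p - 1) := by
  rw [add_pow_pred_eq_sum (F := F) hp, range_eq_Ico, sum_eq_sum_Ico_succ_bot hp.pos,
    Ico_add_one_left_eq_Ioo]
  simp

theorem neg_one_pow_sub_char (hp : p.Prime) {i : ℕ} (hi : i ≤ p) :
    (-1 : F) ^ (p - i) = -(-1) ^ i := by
  have := Fact.mk hp
  have hp' := neg_one_pow_char F p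
  rw [← Nat.sub_add_cancel hi, pow_add] at hp'
  have hsq : ((-1 : F) ^ i) ^ 2 = 1 := by rw [← pow_mul, pow_mul']; simp
  linear_combination (-1 : F) ^ i * hp' - (-1 : F) ^ (p - i) * hsq

theorem sum_Ioo_neg_one_pow_smul_pred_eq_sub (hp : p.Prime) (a b : W) :
    ∑ i ∈ Ioo 0 p, (-1 : F) ^ i • (a ^ (i - 1) * b ^ (p - i)) =
      a ^ (p - 1) - (a + b) ^ (p - 1) := by
  have h := sum_Ico_reflect (fun j => (-1 : F) ^ j • (b ^ j * a ^ (p - 1 - j))) 1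
    (n := p) le_self_add
  rw [Nat.add_sub_cancel, Nat.add_sub_cancel_left] at h
  rw [← neg_sub, add_comm, ← sum_Ioo_neg_one_pow_smul_eq_sub (F := F) hp,
    ← Ico_add_one_left_eq_Ioo, zero_add, ← h, ← sum_neg_distrib]
  refine sum_congr rfl fun i hi => ?_
  have hip := (mem_Ico.1 hi).2
  rw [neg_one_pow_sub_char hp hip.le, show p - 1 - (p - i) = i - 1 by omega, mul_comm, neg_smul,
    neg_neg]

theorem neg_one_pow_mul_inv_smul_eq {i : ℕ} (hi0 : 0 < i) (hip : i < p) (a b x y : W) :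
    ((-1 : F) ^ i * (i : F)⁻¹) •
        (a ^ i * ((p - i) • (b ^ (p - i - 1) * y)) + b ^ (p - i) * (i • (a ^ (i - 1) * x))) =
      ((-1 : F) ^ i • (a ^ (i - 1) * b ^ (p - i))) * x -
        ((-1 : F) ^ i • (a ^ i * b ^ (p - 1 - i))) * y := by
  have hi : (i : F) ≠ 0 := fun h =>
    Nat.not_dvd_of_pos_of_lt hi0 hip ((CharP.cast_eq_zero_iff F p i).1 h)
  have hpi : ((p - i : ℕ) : F) = -i := by rw [Nat.cast_sub hip.le, CharP.cast_eq_zero, zero_sub]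
  have hinv : algebraMap F W (i : F)⁻¹ * algebraMap F W i = 1 := by
    rw [← map_mul, inv_mul_cancel₀ hi, map_one]
  rw [← Nat.cast_smul_eq_nsmul F, ← Nat.cast_smul_eq_nsmul F, hpi, Nat.sub_right_comm]
  simp only [Algebra.smul_def, map_mul, map_pow, map_neg, map_one]
  linear_combination
    (-1 : W) ^ i * (a ^ (i - 1) * b ^ (p - i) * x - a ^ i * b ^ (p - 1 - i) * y) * hinv

/-- The second component of `dpow_add` for `(a, x)` and `(b, y)` in the dual numbers. -/
theorem neg_add_pow_pred_mul_add (hp : p.Prime) (a b x y : W) :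
    -((a + b) ^ (p - 1) * (x + y)) =
      -(a ^ (p - 1) * x) + -(b ^ (p - 1) * y) +
        ∑ i ∈ Ioo 0 p, ((-1 : F) ^ i * (i : F)⁻¹) •
          (a ^ i * ((p - i) • (b ^ (p - i - 1) * y)) +
            b ^ (p - i) * (i • (a ^ (i - 1) * x))) := by
  rw [sum_congr rfl fun i hi =>
      neg_one_pow_mul_inv_smul_eq (mem_Ioo.1 hi).1 (mem_Ioo.1 hi).2 a b x y,
    sum_sub_distrib, ← sum_mul, ← sum_mul, sum_Ioo_neg_one_pow_smul_pred_eq_sub hp,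
    sum_Ioo_neg_one_pow_smul_eq_sub hp]
  ring

end CharP

section Embedding
variable {F : Type} [Field F] {A : Type} [AddCommGroup A] [Module F A]

theorem exists_commRing_embedding (mul : A →ₗ[F] A →ₗ[F] A)
    (mul_comm : ∀ a b, mul a b = mul b a)
    (mul_assoc : ∀ a b c, mul (mul a b) c = mul a (mul b c)) :
    ∃ (W : Type) (_ : CommRing W) (_ : Algebra F W) (j : A →ₗ[F] W),
      Function.Injective j ∧ ∀ a b, j (mul a b) = j a * j b := by
  let : NonUnitalCommRing A :=
    { (inferInstance : AddCommGroup A) with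
      mul := fun a b => mul a b
      left_distrib := fun a => (mul a).map_add
      right_distrib := mul.map_add₂
      zero_mul := mul.map_zero₂
      mul_zero := fun a => (mul a).map_zero
      mul_assoc := mul_assoc
      mul_comm := mul_comm }
  have : SMulCommClass F A A := ⟨fun c a b => ((mul a).map_smul c b).symm⟩
  have : IsScalarTower F A A := ⟨mul.map_smul₂⟩
  exact ⟨Unitization F A, inferInstance, inferInstance, Unitization.inrHom F F A,
    Unitization.inrHom_injective, Unitization.inr_mul F⟩

variable {p : ℕ}

theorem DPAlg.exists_commRing_embedding (S : DPAlg p F A) :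
    ∃ (W : Type) (_ : CommRing W) (_ : Algebra F W) (j : A →ₗ[F] W),
      Function.Injective j ∧ ∀ a b, j (S.mul a b) = j a * j b :=
  _root_.exists_commRing_embedding S.mul S.mul_comm S.mul_assoc

end Embedding

section Mpow
variable {F : Type} [Field F] {A : Type} [AddCommGroup A] [Module F A]
  (mul : A →ₗ[F] A →ₗ[F] A)

theorem mpow_succ (a : A) (n : ℕ) : mpow mul a (n + 1) = mul (mpow mul a n) a := rfl

theorem mpow_smul (c : F) (a : A) (n : ℕ) :
    mpow mul (c • a) n = c ^ (n + 1) • mpow mul a n := by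
  induction n with
  | zero => simp [mpow]
  | succ n ih => rw [mpow_succ, mpow_succ, ih, mul.map_smul₂, map_smul, smul_smul, ← pow_succ]

theorem map_mpow {W : Type} [Monoid W] (j : A → W) (hj : ∀ a b, j (mul a b) = j a * j b)
    (a : A) (n : ℕ) : j (mpow mul a n) = j a ^ (n + 1) := by
  induction n with
  | zero => simp [mpow]
  | succ n ih => rw [mpow_succ, hj, ih, ← pow_succ]

theorem DPHom.map_mpow {p : ℕ} {B : Type} [AddCommGroup B] [Module F B]
    {S : DPAlg p F A} {T : DPAlg p F B} (g : DPHom S T) (a : A) (n : ℕ) :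
    g.toFun (mpow S.mul a n) = mpow T.mul (g.toFun a) n := by
  induction n with
  | zero => rfl
  | succ n ih => rw [mpow_succ, mpow_succ, g.map_mul, ih]

end Mpow

section Homs
variable {p : ℕ} {F : Type} [Field F] {A B C : Type} [AddCommGroup A] [Module F A]
  [AddCommGroup B] [Module F B] [AddCommGroup C] [Module F C]
  {S : DPAlg p F A} {T : DPAlg p F B} {U : DPAlg p F C}

@[simps]
def DPHom.comp (g : DPHom T U) (f : DPHom S T) : DPHom S U where
  toFun := g.toFun ∘ₗ f.toFun
  map_mul a b := by rw [LinearMap.comp_apply, f.map_mul, g.map_mul]; rfl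
  map_dpow a := by rw [LinearMap.comp_apply, f.map_dpow, g.map_dpow]; rfl

end Homs

section DualNumbers
variable {F : Type} [Field F] {E : Type} [AddCommGroup E] [Module F E]

def dualMul (mul : E →ₗ[F] E →ₗ[F] E) : E × E →ₗ[F] E × E →ₗ[F] E × E :=
  LinearMap.mk₂ F (fun u v => (mul u.1 v.1, mul u.1 v.2 + mul v.1 u.2))
    (fun _ _ _ => Prod.ext (mul.map_add₂ _ _ _) <| by
      simp only [Prod.fst_add, Prod.snd_add, map_add, LinearMap.add_apply]; abel)
    (fun _ _ _ => Prod.ext (mul.map_smul₂ _ _ _) <| by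
      simp only [Prod.smul_fst, Prod.smul_snd, map_smul, LinearMap.smul_apply, smul_add])
    (fun _ _ _ => Prod.ext (map_add _ _ _) <| by
      simp only [Prod.fst_add, Prod.snd_add, map_add, LinearMap.add_apply]; abel)
    (fun _ _ _ => Prod.ext (map_smul _ _ _) <| by
      simp only [Prod.smul_fst, Prod.smul_snd, map_smul, LinearMap.smul_apply, smul_add])

variable (mul : E →ₗ[F] E →ₗ[F] E)

@[simp]
theorem dualMul_apply (u v : E × E) :
    dualMul mul u v = (mul u.1 v.1, mul u.1 v.2 + mul v.1 u.2) := rfl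

@[simp]
theorem mpow_dualMul_fst (u : E × E) (n : ℕ) :
    (mpow (dualMul mul) u n).1 = mpow mul u.1 n := by
  induction n with
  | zero => rfl
  | succ n ih => rw [mpow_succ, mpow_succ, dualMul_apply, ih]

theorem map_mpow_dualMul_snd {W : Type} [CommRing W] [Module F W] (j : E →ₗ[F] W)
    (hj : ∀ a b, j (mul a b) = j a * j b) (u : E × E) (n : ℕ) :
    j (mpow (dualMul mul) u n).2 = (n + 1) • (j u.1 ^ n * j u.2) := by
  induction n with
  | zero => simp [mpow]
  | succ n ih =>
    rw [mpow_succ, dualMul_apply, map_add, hj, hj, mpow_dualMul_fst, map_mpow mul j hj, ih,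
      mul_smul_comm, succ_nsmul _ (n + 1)]
    ring

end DualNumbers

namespace DPAlg
variable {p : ℕ} {F : Type} [Field F] {E : Type} [AddCommGroup E] [Module F E]
  (S : DPAlg p F E)

theorem map_pow_eq_zero {W : Type} [Semiring W] [Module F W] (j : E →ₗ[F] W)
    (hj : ∀ a b, j (S.mul a b) = j a * j b) (hp : 1 ≤ p) (a : E) : j a ^ p = 0 := by
  rw [← Nat.sub_add_cancel hp, ← map_mpow S.mul j hj, S.pow_p, map_zero]

/-- `(a + ε x)^[p] = a^[p] + a^[p-1] ε x`, and `a^[p-1] = a^{p-1} / (p-1)! = -a^{p-1}` by Wilson's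
theorem; note that `mpow S.mul a (p - 2) = a^{p-1}`. -/
def dualDpow (u : E × E) : E × E := (S.dpow u.1, -S.mul (mpow S.mul u.1 (p - 2)) u.2)

theorem dualMul_assoc (u v w : E × E) :
    dualMul S.mul (dualMul S.mul u v) w = dualMul S.mul u (dualMul S.mul v w) := by
  obtain ⟨W, _, _, j, hj, hjmul⟩ := S.exists_commRing_embedding
  refine Prod.ext (S.mul_assoc _ _ _) (hj ?_)
  simp only [dualMul_apply, map_add, hjmul]
  ring

theorem mpow_dualMul_pred (hp : p.Prime) [CharP F p] (u : E × E) :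
    mpow (dualMul S.mul) u (p - 1) = 0 := by
  obtain ⟨W, _, _, j, hj, hjmul⟩ := S.exists_commRing_embedding
  refine Prod.ext ((mpow_dualMul_fst _ _ _).trans (S.pow_p _)) (hj ?_)
  rw [map_mpow_dualMul_snd S.mul j hjmul, Nat.sub_add_cancel hp.one_le,
    ← Nat.cast_smul_eq_nsmul F, CharP.cast_eq_zero, zero_smul, Prod.snd_zero, map_zero]

theorem dualDpow_smul (hp : 2 ≤ p) (c : F) (u : E × E) :
    S.dualDpow (c • u) = c ^ p • S.dualDpow u := by
  refine Prod.ext (S.dpow_smul c u.1) ?_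
  simp only [dualDpow, Prod.smul_fst, Prod.smul_snd, mpow_smul, map_smul, LinearMap.smul_apply,
    smul_neg, smul_smul, ← pow_succ', show p - 2 + 1 + 1 = p by omega]

theorem dualDpow_dualMul (hp : 2 ≤ p) (u v : E × E) :
    S.dualDpow (dualMul S.mul u v) = 0 := by
  obtain ⟨W, _, _, j, hj, hjmul⟩ := S.exists_commRing_embedding
  refine Prod.ext (S.dpow_mul _ _) (hj ?_)
  obtain ⟨k, rfl⟩ : ∃ k, p = k + 2 := ⟨p - 2, by omega⟩
  have hzero := S.map_pow_eq_zero j hjmul (by omega)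
  simp only [dualDpow, dualMul_apply, map_neg, map_add, hjmul, map_mpow S.mul j hjmul,
    Nat.add_sub_cancel, Prod.snd_zero, map_zero]
  linear_combination -(j v.1 ^ (k + 1) * j v.2) * hzero u.1 - j u.1 ^ (k + 1) * j u.2 * hzero v.1

theorem dualDpow_add (hp : p.Prime) [CharP F p] (u v : E × E) :
    S.dualDpow (u + v) = S.dualDpow u + S.dualDpow v +
      ∑ i ∈ Ioo 0 p, ((-1 : F) ^ i * (i : F)⁻¹) •
        dualMul S.mul (mpow (dualMul S.mul) u (i - 1)) (mpow (dualMul S.mul) v (p - i - 1)) := by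
  obtain ⟨W, _, _, j, hj, hjmul⟩ := S.exists_commRing_embedding
  refine Prod.ext ?_ (hj ?_)
  · simp only [dualDpow, Prod.fst_add, Prod.fst_sum, Prod.smul_fst, dualMul_apply,
      mpow_dualMul_fst]
    exact S.dpow_add u.1 v.1
  · simp only [dualDpow, Prod.fst_add, Prod.snd_add, Prod.snd_sum, Prod.smul_snd, dualMul_apply,
      mpow_dualMul_fst, map_add, map_neg, map_sum, map_smul, hjmul, map_mpow S.mul j hjmul,
      map_mpow_dualMul_snd S.mul j hjmul]
    rw [show p - 2 + 1 = p - 1 by have := hp.two_le; omega, ← mul_add,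
      neg_add_pow_pred_mul_add (F := F) hp]
    refine congrArg _ (sum_congr rfl fun i hi => ?_)
    obtain ⟨hi0, hip⟩ := mem_Ioo.1 hi
    rw [Nat.sub_add_cancel hi0, Nat.sub_add_cancel (by omega : 1 ≤ p - i)]

variable (hp : p.Prime) [CharP F p]

def dualNumbers : DPAlg p F (E × E) where
  mul := dualMul S.mul
  mul_comm _ _ := Prod.ext (S.mul_comm _ _) (add_comm _ _)
  mul_assoc := S.dualMul_assoc
  dpow := S.dualDpow
  dpow_smul := S.dualDpow_smul hp.two_le
  pow_p := S.mpow_dualMul_pred hp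
  dpow_add := S.dualDpow_add hp
  dpow_mul := S.dualDpow_dualMul hp.two_le

@[simp]
theorem dualNumbers_mul : (S.dualNumbers hp).mul = dualMul S.mul := rfl

@[simp]
theorem dualNumbers_dpow : (S.dualNumbers hp).dpow = S.dualDpow := rfl

@[simps]
def inlHom : DPHom S (S.dualNumbers hp) where
  toFun := LinearMap.inl F E E
  map_mul _ _ := by simp
  map_dpow _ := by simp [dualDpow]

@[simps]
def fstHom : DPHom (S.dualNumbers hp) S where
  toFun := LinearMap.fst F E E
  map_mul _ _ := rfl
  map_dpow _ := rfl

variable {S hp} {A : Type} [AddCommGroup A] [Module F A] {S' : DPAlg p F A}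

theorem _root_.DPHom.snd_map_mul (h : DPHom S' (S.dualNumbers hp)) (a b : A) :
    (h.toFun (S'.mul a b)).2 =
      S.mul (h.toFun a).1 (h.toFun b).2 + S.mul (h.toFun b).1 (h.toFun a).2 := by
  rw [h.map_mul]
  rfl

theorem _root_.DPHom.snd_map_dpow (h : DPHom S' (S.dualNumbers hp)) (a : A) :
    (h.toFun (S'.dpow a)).2 = -S.mul (h.toFun (mpow S'.mul a (p - 2))).1 (h.toFun a).2 := by
  rw [h.map_dpow, h.map_mpow]
  exact congrArg (fun x => -S.mul x (h.toFun a).2) (mpow_dualMul_fst S.mul _ _).symm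

end DPAlg

theorem lift_on_free_bundle_is_morphism_general
    (p : ℕ) (hp : p.Prime) (F : Type) [Field F] [CharP F p]
    (A M E TE : Type) [AddCommGroup A] [Module F A] [AddCommGroup M] [Module F M]
    [AddCommGroup E] [Module F E] [AddCommGroup TE] [Module F TE]
    (S : DPAlg p F A)
    -- the `U(A)`-module structure on `M`
    (sm : A →ₗ[F] M →ₗ[F] M)
    -- `E = Γ⁺_A(M)`, the free divided power `A`-algebra on `M`
    (SE : DPAlg p F E) (q : DPHom S SE) (ι : M →ₗ[F] E)
    (hι : ∀ a m, ι (sm a m) = SE.mul (q.toFun a) (ι m))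
    (hEuniv : ∀ (B : Type) [AddCommGroup B] [Module F B] (SB : DPAlg p F B)
      (f : DPHom S SB) (φ : M →ₗ[F] B),
      (∀ a m, φ (sm a m) = SB.mul (f.toFun a) (φ m)) →
      ∃! g : DPHom SE SB,
        (∀ a, g.toFun (q.toFun a) = f.toFun a) ∧ (∀ m, g.toFun (ι m) = φ m))
    -- `T°(E) = Γ⁺_E(Ω¹_E)`, with inclusion `pE` and universal special derivation `dE`
    (STE : DPAlg p F TE) (pE : DPHom SE STE) (dE : E →ₗ[F] TE)
    (hTuniv : ∀ (B : Type) [AddCommGroup B] [Module F B] (SB : DPAlg p F B)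
      (g : DPHom SE SB) (D : E →ₗ[F] B),
      (∀ e e', D (SE.mul e e') =
        SB.mul (g.toFun e) (D e') + SB.mul (g.toFun e') (D e)) →
      (∀ e, D (SE.dpow e) =
        - SB.mul (g.toFun (mpow SE.mul e (p - 2))) (D e)) →
      ∃! h : DPHom STE SB,
        (∀ e, h.toFun (pE.toFun e) = g.toFun e) ∧ (∀ e, h.toFun (dE e) = D e)) :
    ∃ lam : DPHom STE SE,
      (∀ a, lam.toFun (pE.toFun (q.toFun a)) = q.toFun a) ∧
      (∀ m, lam.toFun (pE.toFun (ι m)) = 0) ∧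
      (∀ a, lam.toFun (dE (q.toFun a)) = 0) ∧
      (∀ m, lam.toFun (dE (ι m)) = ι m) := by
  obtain ⟨h, ⟨hq, hι'⟩, -⟩ := hEuniv (E × E) (SE.dualNumbers hp) ((SE.inlHom hp).comp q)
    (LinearMap.inr F E E ∘ₗ ι) fun a m => by simp [hι]
  obtain ⟨lam, ⟨hlp, hld⟩, -⟩ := hTuniv E SE ((SE.fstHom hp).comp h)
    (LinearMap.snd F E E ∘ₗ h.toFun) h.snd_map_mul h.snd_map_dpow
  refine ⟨lam, fun a => ?_, fun m => ?_, fun a => ?_, fun m => ?_⟩ <;> simp [hlp, hld, hq, hι']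

/-- Let `A` be a divided power algebra, `M` a module over the
underlying commutative algebra `U(A)`, and let `E = Γ⁺_A(M)` be the free divided power
`A`-algebra on `M` (characterised by its universal property via `q : A → E` and
`ι : M → E`), with `T°(E) = Γ⁺_E(Ω¹_E)` (characterised by its universal property via
the inclusion `pE : E → T°(E)` and the universal special derivation `dE`).  Then the
lift `λ : T°(Γ⁺_A(M)) → Γ⁺_A(M)` determined on generators by `λ(a) = a`, `λ(m) = 0`,
`λ(da) = 0`, `λ(dm) = m` is a well-defined morphism of divided power algebras. -/
theorem lift_on_free_bundle_is_morphism
    (p : ℕ) (hp : p.Prime) (F : Type) [Field F] [CharP F p]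
    (A M E TE : Type) [AddCommGroup A] [Module F A] [AddCommGroup M] [Module F M]
    [AddCommGroup E] [Module F E] [AddCommGroup TE] [Module F TE]
    (S : DPAlg p F A)
    -- the `U(A)`-module structure on `M`
    (sm : A →ₗ[F] M →ₗ[F] M)
    (hsm : ∀ a b m, sm (S.mul a b) m = sm a (sm b m))
    -- `E = Γ⁺_A(M)`, the free divided power `A`-algebra on `M`
    (SE : DPAlg p F E) (q : DPHom S SE) (ι : M →ₗ[F] E)
    (hι : ∀ a m, ι (sm a m) = SE.mul (q.toFun a) (ι m))
    (hEuniv : ∀ (B : Type) [AddCommGroup B] [Module F B] (SB : DPAlg p F B)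
      (f : DPHom S SB) (φ : M →ₗ[F] B),
      (∀ a m, φ (sm a m) = SB.mul (f.toFun a) (φ m)) →
      ∃! g : DPHom SE SB,
        (∀ a, g.toFun (q.toFun a) = f.toFun a) ∧ (∀ m, g.toFun (ι m) = φ m))
    -- `T°(E) = Γ⁺_E(Ω¹_E)`, with inclusion `pE` and universal special derivation `dE`
    (STE : DPAlg p F TE) (pE : DPHom SE STE) (dE : E →ₗ[F] TE)
    (hd1 : ∀ e e', dE (SE.mul e e') =
      STE.mul (pE.toFun e) (dE e') + STE.mul (pE.toFun e') (dE e))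
    (hd2 : ∀ e, dE (SE.dpow e) =
      - STE.mul (pE.toFun (mpow SE.mul e (p - 2))) (dE e))
    (hTuniv : ∀ (B : Type) [AddCommGroup B] [Module F B] (SB : DPAlg p F B)
      (g : DPHom SE SB) (D : E →ₗ[F] B),
      (∀ e e', D (SE.mul e e') =
        SB.mul (g.toFun e) (D e') + SB.mul (g.toFun e') (D e)) →
      (∀ e, D (SE.dpow e) =
        - SB.mul (g.toFun (mpow SE.mul e (p - 2))) (D e)) →
      ∃! h : DPHom STE SB,
        (∀ e, h.toFun (pE.toFun e) = g.toFun e) ∧ (∀ e, h.toFun (dE e) = D e)) :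
    ∃ lam : DPHom STE SE,
      (∀ a, lam.toFun (pE.toFun (q.toFun a)) = q.toFun a) ∧
      (∀ m, lam.toFun (pE.toFun (ι m)) = 0) ∧
      (∀ a, lam.toFun (dE (q.toFun a)) = 0) ∧
      (∀ m, lam.toFun (dE (ι m)) = ι m) :=
  lift_on_free_bundle_is_morphism_general p hp F A M E TE S sm SE q ι hι hEuniv STE pE dE hTuniv
end

section
/- Let A be a divided power algebra in characteristic p and let q: E → A be a differential bundle over A in the geometric tangent structure with lift λ: T°(E) → E. Then the image of the linear map D_λ = λ ∘ d: E → E is a submodule of E for the U(A)-module structure induced by q, and a·D_λ(e) = D_λ(q(a)e) for all a ∈ A, e ∈ E. -/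
open scoped TensorProduct

section

variable {p : ℕ} {F : Type} [Field F] {E TE : Type} [AddCommGroup E] [Module F E]
  [AddCommGroup TE] [Module F TE] {SE : DPAlg p F E} {STE : DPAlg p F TE}

def Dlam (dE : E →ₗ[F] TE) (lam : DPHom STE SE) : E →ₗ[F] E :=
  lam.toFun ∘ₗ dE

theorem Dlam_mul_left (pE : DPHom SE STE) (dE : E →ₗ[F] TE)
    (hd : ∀ e e', dE (SE.mul e e') =
      STE.mul (pE.toFun e) (dE e') + STE.mul (pE.toFun e') (dE e))
    (lam : DPHom STE SE) {x : E} (hpx : lam.toFun (pE.toFun x) = x)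
    (hdx : lam.toFun (dE x) = 0) (e : E) :
    Dlam dE lam (SE.mul x e) = SE.mul x (Dlam dE lam e) := by
  simp only [Dlam, LinearMap.comp_apply]
  rw [hd, map_add, lam.map_mul, lam.map_mul, hpx, hdx, map_zero, add_zero]

end

theorem image_of_Dlambda_is_submodule_general
    (p : ℕ) (F : Type) [Field F]
    (A E TE : Type) [AddCommGroup A] [Module F A]
    [AddCommGroup E] [Module F E] [AddCommGroup TE] [Module F TE]
    (S : DPAlg p F A) (SE : DPAlg p F E) (q : DPHom S SE)
    (STE : DPAlg p F TE) (pE : DPHom SE STE) (dE : E →ₗ[F] TE)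
    (hd1 : ∀ e e', dE (SE.mul e e') =
      STE.mul (pE.toFun e) (dE e') + STE.mul (pE.toFun e') (dE e))
    (lam : DPHom STE SE)
    (hlam1 : ∀ a, lam.toFun (pE.toFun (q.toFun a)) = q.toFun a)
    (hlam2 : ∀ a, lam.toFun (dE (q.toFun a)) = 0) :
    (∀ a e, SE.mul (q.toFun a) (lam.toFun (dE e)) =
      lam.toFun (dE (SE.mul (q.toFun a) e))) ∧
    (∀ a e, ∃ e', lam.toFun (dE e') =
      SE.mul (q.toFun a) (lam.toFun (dE e))) := by
  have hD : ∀ a e,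
      Dlam dE lam (SE.mul (q.toFun a) e) = SE.mul (q.toFun a) (Dlam dE lam e) :=
    fun a => Dlam_mul_left pE dE hd1 lam (hlam1 a) (hlam2 a)
  exact ⟨fun a e => (hD a e).symm, fun a e => ⟨SE.mul (q.toFun a) e, hD a e⟩⟩

/-- Let `q : A → E` be a differential bundle over `A` in the
geometric tangent structure, with lift `λ : T°(E) → E` (where `T°(E) = Γ⁺_E(Ω¹_E)`
has structural inclusion `pE` and universal special derivation `dE`), satisfying in
particular `λ ∘ T°(q) = q ∘ z`, i.e. `λ(pE(q a)) = q a` and `λ(dE(q a)) = 0`.  Then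
the image of `D_λ = λ ∘ dE : E → E` is a `U(A)`-submodule of `E` (for the module
structure induced by `q`), and `a · D_λ(e) = D_λ(q(a)e)`. -/
theorem image_of_Dlambda_is_submodule
    (p : ℕ) (hp : p.Prime) (F : Type) [Field F] [CharP F p]
    (A E TE : Type) [AddCommGroup A] [Module F A]
    [AddCommGroup E] [Module F E] [AddCommGroup TE] [Module F TE]
    (S : DPAlg p F A) (SE : DPAlg p F E) (q : DPHom S SE)
    (STE : DPAlg p F TE) (pE : DPHom SE STE) (dE : E →ₗ[F] TE)
    (hd1 : ∀ e e', dE (SE.mul e e') =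
      STE.mul (pE.toFun e) (dE e') + STE.mul (pE.toFun e') (dE e))
    (hd2 : ∀ e, dE (SE.dpow e) =
      - STE.mul (pE.toFun (mpow SE.mul e (p - 2))) (dE e))
    (lam : DPHom STE SE)
    (hlam1 : ∀ a, lam.toFun (pE.toFun (q.toFun a)) = q.toFun a)
    (hlam2 : ∀ a, lam.toFun (dE (q.toFun a)) = 0) :
    (∀ a e, SE.mul (q.toFun a) (lam.toFun (dE e)) =
      lam.toFun (dE (SE.mul (q.toFun a) e))) ∧
    (∀ a e, ∃ e', lam.toFun (dE e') =
      SE.mul (q.toFun a) (lam.toFun (dE e))) :=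
  image_of_Dlambda_is_submodule_general p F A E TE S SE q STE pE dE hd1 lam hlam1 hlam2
end
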